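/- Assume k₁ < 2αB. Then: for every y ∈ (0,k₁), y^{-1/γ} is the unique maximizer of x ↦ f(x) - yx over [-B,∞); for every y ∈ (k₁, 2αB], -y/(2α) is the unique maximizer; for every y > 2αB, -B is the unique maximizer; and for y = k₁ the set of maximizers is exactly {k₁^{-1/γ}, -k₁/(2α)}. -/

import Mathlib

open Real

/-- The non-concave objective `f(x) = -αx²` for `x < 0`, `x^{1-γ}/(1-γ)` for `x > 0`,
and `f(0) = 0`. -/
noncomputable def f (γ α x : ℝ) : ℝ :=
  if x < 0 then -α * x ^ 2 else x ^ (1 - γ) / (1 - γ)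

/-- The threshold `k₁ = (4αγ/(1-γ))^{γ/(1+γ)}`. -/
noncomputable def k₁ (γ α : ℝ) : ℝ := (4 * α * γ / (1 - γ)) ^ (γ / (1 + γ))

/-- The set of maximizers of `x ↦ f(x) - yx` over `[-B, ∞)`. -/
def argmaxSet (γ α B y : ℝ) : Set ℝ :=
  {x : ℝ | x ∈ Set.Ici (-B) ∧
    ∀ x' ∈ Set.Ici (-B), f γ α x' - y * x' ≤ f γ α x - y * x}

/-- Master lemma identifying the argmax set. -/
lemma argmax_eq (γ α B y V : ℝ) (S : Set ℝ) (hS : ∀ a ∈ S, -B ≤ a)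
    (hval : ∀ a ∈ S, f γ α a - y * a = V) (hne : S.Nonempty)
    (hub : ∀ x, -B ≤ x → x ∉ S → f γ α x - y * x < V) :
    argmaxSet γ α B y = S := by
  ext x
  constructor
  · rintro ⟨hxB, hmax⟩
    by_contra hxS
    obtain ⟨a, ha⟩ := hne
    have h1 := hmax a (hS a ha)
    have h2 := hub x hxB hxS
    rw [hval a ha] at h1
    linarith
  · intro hxS
    refine ⟨hS x hxS, fun x' hx' => ?_⟩
    rw [hval x hxS]
    by_cases h : x' ∈ S
    · rw [hval x' h]
    · exact (hub x' hx' h).le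

section main

variable {γ α y : ℝ}

lemma hA1 (hγ0 : 0 < γ) (hy : 0 < y) :
    (y ^ (-(1/γ))) ^ (1 - γ) = y ^ ((γ-1)/γ) := by
  rw [← Real.rpow_mul hy.le]
  congr 1
  field_simp
  ring

lemma hA2 (hγ0 : 0 < γ) (hy : 0 < y) :
    y * y ^ (-(1/γ)) = y ^ ((γ-1)/γ) := by
  nth_rewrite 1 [← Real.rpow_one y]
  rw [← Real.rpow_add hy]
  congr 1
  field_simp
  ring

/-- Value of the positive branch at its critical point. -/
lemma pos_eq (hγ0 : 0 < γ) (hγ1 : γ < 1) (hy : 0 < y) :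
    (y ^ (-(1/γ))) ^ (1 - γ) / (1 - γ) - y * y ^ (-(1/γ))
      = γ / (1 - γ) * y ^ ((γ-1)/γ) := by
  have h1γ : (0:ℝ) < 1 - γ := by linarith
  rw [hA1 hγ0 hy, hA2 hγ0 hy]
  field_simp
  ring

/-- Strict bound on the positive branch away from the critical point. -/
lemma pos_bound (hγ0 : 0 < γ) (hγ1 : γ < 1) (hy : 0 < y) {x : ℝ} (hx : 0 ≤ x)
    (hne : x ≠ y ^ (-(1/γ))) :
    x ^ (1 - γ) / (1 - γ) - y * x < γ / (1 - γ) * y ^ ((γ-1)/γ) := by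
  have h1γ : (0:ℝ) < 1 - γ := by linarith
  set u := y ^ (-(1/γ)) with hu
  have hu0 : 0 < u := rpow_pos_of_pos hy _
  set t := x / u with ht
  have ht0 : 0 ≤ t := div_nonneg hx hu0.le
  have htne : t ≠ 1 := by
    intro h
    exact hne ((div_eq_one_iff_eq hu0.ne').mp h)
  have key : t ^ (1 - γ) < 1 + (1 - γ) * (t - 1) := by
    have h := rpow_one_add_lt_one_add_mul_self (s := t - 1)
      (by linarith) (fun h => htne (by linarith)) h1γ (by linarith)
    have e : 1 + (t - 1) = t := by ring
    rw [e] at h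
    linarith
  have hxut : x = t * u := by rw [ht, div_mul_cancel₀ x hu0.ne']
  have hmul : x ^ (1 - γ) = t ^ (1 - γ) * u ^ (1 - γ) := by
    rw [hxut, Real.mul_rpow ht0 hu0.le]
  have hA0 : 0 < y ^ ((γ-1)/γ) := rpow_pos_of_pos hy _
  have h1 : u ^ (1 - γ) = y ^ ((γ-1)/γ) := hA1 hγ0 hy
  have h2 : y * u = y ^ ((γ-1)/γ) := hA2 hγ0 hy
  have hyx : y * x = t * y ^ ((γ-1)/γ) := by rw [hxut, ← h2]; ring
  rw [hmul, h1, hyx]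
  have h3 : t ^ (1 - γ) * y ^ ((γ-1)/γ) < (1 + (1 - γ) * (t - 1)) * y ^ ((γ-1)/γ) :=
    mul_lt_mul_of_pos_right key hA0
  have h4 : (1 + (1 - γ) * (t - 1)) * y ^ ((γ-1)/γ) / (1 - γ) - t * y ^ ((γ-1)/γ)
      = γ / (1 - γ) * y ^ ((γ-1)/γ) := by
    field_simp
    ring
  have h5 : t ^ (1 - γ) * y ^ ((γ-1)/γ) / (1 - γ)
      < (1 + (1 - γ) * (t - 1)) * y ^ ((γ-1)/γ) / (1 - γ) := by
    apply div_lt_div_of_pos_right h3 h1γ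
  linarith

/-- Negative branch: value at the critical point `-y/(2α)`. -/
lemma neg_eq (hα : 0 < α) :
    -α * (-y / (2 * α)) ^ 2 - y * (-y / (2 * α)) = y ^ 2 / (4 * α) := by
  field_simp
  ring

/-- Negative branch strict bound. -/
lemma neg_bound (hα : 0 < α) {x : ℝ} (hne : x ≠ -y / (2 * α)) :
    -α * x ^ 2 - y * x < y ^ 2 / (4 * α) := by
  have h : 2 * α * x + y ≠ 0 := by
    intro h
    apply hne
    field_simp
    linarith
  have h2 : 0 < (2 * α * x + y) ^ 2 := pow_two_pos_of_ne_zero h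
  rw [lt_div_iff₀ (by positivity : (0:ℝ) < 4 * α)]
  nlinarith [h2]

lemma k1_pow (hγ0 : 0 < γ) (hγ1 : γ < 1) (hα : 0 < α) :
    (k₁ γ α) ^ ((1 + γ)/γ) = 4 * α * γ / (1 - γ) := by
  have hc : (0:ℝ) < 4 * α * γ / (1 - γ) := by
    apply div_pos (by positivity) (by linarith)
  rw [k₁, ← Real.rpow_mul hc.le]
  rw [show γ / (1 + γ) * ((1 + γ)/γ) = 1 by field_simp]
  exact Real.rpow_one _

lemma k1_pos (hγ0 : 0 < γ) (hγ1 : γ < 1) (hα : 0 < α) : 0 < k₁ γ α := by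
  apply rpow_pos_of_pos
  apply div_pos (by positivity) (by linarith)

/-- Splitting `y²` as a product of powers. -/
lemma y_sq (hy : 0 < y) (hγ0 : 0 < γ) :
    y ^ 2 = y ^ ((γ-1)/γ) * y ^ ((1 + γ)/γ) := by
  rw [← Real.rpow_add hy]
  rw [show (γ-1)/γ + (1 + γ)/γ = 2 by field_simp; ring]
  rw [show (2:ℝ) = ((2:ℕ):ℝ) by norm_num, Real.rpow_natCast]

lemma comp_lt (hγ0 : 0 < γ) (hγ1 : γ < 1) (hα : 0 < α) (hy : 0 < y) (hky : k₁ γ α < y) :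
    γ / (1 - γ) * y ^ ((γ-1)/γ) < y ^ 2 / (4 * α) := by
  have h1γ : (0:ℝ) < 1 - γ := by linarith
  have hE : 4 * α * γ / (1 - γ) < y ^ ((1 + γ)/γ) := by
    rw [← k1_pow hγ0 hγ1 hα]
    exact Real.rpow_lt_rpow (k1_pos hγ0 hγ1 hα).le hky (by positivity)
  have hA0 : 0 < y ^ ((γ-1)/γ) := rpow_pos_of_pos hy _
  rw [y_sq hy hγ0]
  calc γ / (1 - γ) * y ^ ((γ-1)/γ)
      = y ^ ((γ-1)/γ) * (4 * α * γ / (1 - γ)) / (4 * α) := by field_simp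
    _ < y ^ ((γ-1)/γ) * y ^ ((1 + γ)/γ) / (4 * α) := by gcongr
    
lemma comp_gt (hγ0 : 0 < γ) (hγ1 : γ < 1) (hα : 0 < α) (hy : 0 < y) (hky : y < k₁ γ α) :
    y ^ 2 / (4 * α) < γ / (1 - γ) * y ^ ((γ-1)/γ) := by
  have h1γ : (0:ℝ) < 1 - γ := by linarith
  have hE : y ^ ((1 + γ)/γ) < 4 * α * γ / (1 - γ) := by
    rw [← k1_pow hγ0 hγ1 hα]
    exact Real.rpow_lt_rpow hy.le hky (by positivity)
  have hA0 : 0 < y ^ ((γ-1)/γ) := rpow_pos_of_pos hy _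
  rw [y_sq hy hγ0]
  calc y ^ ((γ-1)/γ) * y ^ ((1 + γ)/γ) / (4 * α)
      < y ^ ((γ-1)/γ) * (4 * α * γ / (1 - γ)) / (4 * α) := by gcongr
    _ = γ / (1 - γ) * y ^ ((γ-1)/γ) := by field_simp

lemma comp_eq (hγ0 : 0 < γ) (hγ1 : γ < 1) (hα : 0 < α) :
    γ / (1 - γ) * (k₁ γ α) ^ ((γ-1)/γ) = (k₁ γ α) ^ 2 / (4 * α) := by
  have h1γ : (0:ℝ) < 1 - γ := by linarith
  have hk0 : 0 < k₁ γ α := k1_pos hγ0 hγ1 hα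
  rw [y_sq hk0 hγ0, k1_pow hγ0 hγ1 hα]
  field_simp

end main

theorem stmt10 (γ α B : ℝ) (hγ0 : 0 < γ) (hγ1 : γ < 1) (hα : 0 < α) (hB : 0 < B)
    (hk : k₁ γ α < 2 * α * B) :
    (∀ y : ℝ, 0 < y → y < k₁ γ α → argmaxSet γ α B y = {y ^ (-(1 / γ))}) ∧
    (∀ y : ℝ, k₁ γ α < y → y ≤ 2 * α * B → argmaxSet γ α B y = {-y / (2 * α)}) ∧
    (∀ y : ℝ, 2 * α * B < y → argmaxSet γ α B y = {-B}) ∧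
    argmaxSet γ α B (k₁ γ α) = {(k₁ γ α) ^ (-(1 / γ)), -(k₁ γ α) / (2 * α)} := by
  have h1γ : (0:ℝ) < 1 - γ := by linarith
  have hk0 : 0 < k₁ γ α := k1_pos hγ0 hγ1 hα
  have hfpos : ∀ x : ℝ, 0 ≤ x → f γ α x = x ^ (1 - γ) / (1 - γ) := fun x hx => by
    simp [f, not_lt.mpr hx]
  have hfneg : ∀ x : ℝ, x < 0 → f γ α x = -α * x ^ 2 := fun x hx => by
    simp [f, hx]
  refine ⟨?_, ?_, ?_, ?_⟩
  · -- regime 1 : 0 < y < k₁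
    intro y hy hyk
    have hu0 : 0 < y ^ (-(1/γ)) := rpow_pos_of_pos hy _
    apply argmax_eq (V := γ / (1 - γ) * y ^ ((γ-1)/γ))
    · rintro a rfl; linarith
    · rintro a rfl
      rw [hfpos _ hu0.le]
      exact pos_eq hγ0 hγ1 hy
    · exact ⟨_, rfl⟩
    · intro x hxB hxS
      have hxne : x ≠ y ^ (-(1/γ)) := hxS
      rcases lt_or_ge x 0 with hx0 | hx0
      · rw [hfneg _ hx0]
        calc -α * x ^ 2 - y * x ≤ y ^ 2 / (4 * α) := by
              rcases eq_or_ne x (-y / (2 * α)) with rfl | hne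
              · exact (neg_eq hα).le
              · exact (neg_bound hα hne).le
          _ < γ / (1 - γ) * y ^ ((γ-1)/γ) := comp_gt hγ0 hγ1 hα hy hyk
      · rw [hfpos _ hx0]
        exact pos_bound hγ0 hγ1 hy hx0 hxne
  · -- regime 2 : k₁ < y ≤ 2αB
    intro y hky hy2
    have hy : 0 < y := hk0.trans hky
    apply argmax_eq (V := y ^ 2 / (4 * α))
    · rintro a rfl
      rw [neg_div]
      have h : y / (2 * α) ≤ B := by
        rw [div_le_iff₀ (by positivity)]; linarith
      linarith
    · rintro a rfl
      have ha : -y / (2 * α) < 0 :=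
        div_neg_of_neg_of_pos (by linarith) (by positivity)
      rw [hfneg _ ha]
      exact neg_eq hα
    · exact ⟨_, rfl⟩
    · intro x hxB hxS
      have hxne : x ≠ -y / (2 * α) := hxS
      rcases lt_or_ge x 0 with hx0 | hx0
      · rw [hfneg _ hx0]
        exact neg_bound hα hxne
      · rw [hfpos _ hx0]
        calc x ^ (1 - γ) / (1 - γ) - y * x ≤ γ / (1 - γ) * y ^ ((γ-1)/γ) := by
              rcases eq_or_ne x (y ^ (-(1/γ))) with rfl | hne
              · exact (pos_eq hγ0 hγ1 hy).le
              · exact (pos_bound hγ0 hγ1 hy hx0 hne).le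
          _ < y ^ 2 / (4 * α) := comp_lt hγ0 hγ1 hα hy hky
  · -- regime 3 : 2αB < y
    intro y hy2
    have hy : 0 < y := lt_trans (by positivity) hy2
    have hP : γ / (1 - γ) * y ^ ((γ-1)/γ) < y * B - α * B ^ 2 := by
      have hstep1 : y ^ ((γ-1)/γ) < (2 * α * B) ^ ((γ-1)/γ) :=
        Real.rpow_lt_rpow_of_neg (by positivity) hy2
          (div_neg_of_neg_of_pos (by linarith) hγ0)
      have hstep2 : γ / (1 - γ) * (2 * α * B) ^ ((γ-1)/γ) < (2 * α * B) ^ 2 / (4 * α) :=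
        comp_lt hγ0 hγ1 hα (by positivity) hk
      have hstep3 : (2 * α * B) ^ 2 / (4 * α) = α * B ^ 2 := by
        field_simp; ring
      have hstep4 : α * B ^ 2 < y * B - α * B ^ 2 := by nlinarith
      have hγpos : 0 < γ / (1 - γ) := by positivity
      nlinarith [mul_lt_mul_of_pos_left hstep1 hγpos]
    apply argmax_eq (V := y * B - α * B ^ 2)
    · rintro a rfl; exact le_refl _
    · rintro a rfl
      rw [hfneg _ (by linarith : -B < 0)]
      ring
    · exact ⟨_, rfl⟩
    · intro x hxB hxS
      have hxne : x ≠ -B := hxS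
      rcases lt_or_ge x 0 with hx0 | hx0
      · rw [hfneg _ hx0]
        have hxB' : -B < x := lt_of_le_of_ne hxB (Ne.symm hxne)
        nlinarith [mul_pos (show (0:ℝ) < x + B by linarith)
          (show (0:ℝ) < y - α * (B - x) by nlinarith)]
      · rw [hfpos _ hx0]
        calc x ^ (1 - γ) / (1 - γ) - y * x ≤ γ / (1 - γ) * y ^ ((γ-1)/γ) := by
              rcases eq_or_ne x (y ^ (-(1/γ))) with rfl | hne
              · exact (pos_eq hγ0 hγ1 hy).le
              · exact (pos_bound hγ0 hγ1 hy hx0 hne).le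
          _ < y * B - α * B ^ 2 := hP
  · -- regime 4 : y = k₁
    have hy := hk0
    have hu0 : 0 < (k₁ γ α) ^ (-(1/γ)) := rpow_pos_of_pos hy _
    apply argmax_eq (V := (k₁ γ α) ^ 2 / (4 * α))
    · intro a haS
      simp only [Set.mem_insert_iff, Set.mem_singleton_iff] at haS
      rcases haS with rfl | rfl
      · linarith
      · rw [neg_div]
        have h : k₁ γ α / (2 * α) ≤ B := by
          rw [div_le_iff₀ (by positivity)]; linarith
        linarith
    · intro a haS
      simp only [Set.mem_insert_iff, Set.mem_singleton_iff] at haS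
      rcases haS with rfl | rfl
      · rw [hfpos _ hu0.le]
        exact (pos_eq hγ0 hγ1 hy).trans (comp_eq hγ0 hγ1 hα)
      · have ha : -(k₁ γ α) / (2 * α) < 0 :=
          div_neg_of_neg_of_pos (by linarith) (by positivity)
        rw [hfneg _ ha]
        exact neg_eq hα
    · exact ⟨_, Or.inl rfl⟩
    · intro x hxB hxS
      simp only [Set.mem_insert_iff, Set.mem_singleton_iff, not_or] at hxS
      obtain ⟨hne1, hne2⟩ := hxS
      rcases lt_or_ge x 0 with hx0 | hx0
      · rw [hfneg _ hx0]
        exact neg_bound hα hne2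
      · rw [hfpos _ hx0]
        rw [← comp_eq hγ0 hγ1 hα]
        exact pos_bound hγ0 hγ1 hy hx0 hne1
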